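/- arXiv:1102.2341 — 5 statements merged into one kernel-verified Lean document; each statement's English description precedes it below -/
import Mathlib

section
/- For a parameter γ ∈ (0,1) and integers k ≥ 0 and p ≥ 0, the partial sum (1-γ)^{k+1} · Σ_{l=0}^{p} γ^l · C(l+k, k) is at most 1 - γ^{p+1}. -/
open Finset

lemma key_id (γ : ℝ) (k : ℕ) : ∀ p : ℕ,
    (1 - γ) * ∑ l ∈ range (p + 1), γ ^ l * ((l + (k + 1)).choose (k + 1) : ℝ) =
      (∑ l ∈ range (p + 1), γ ^ l * ((l + k).choose k : ℝ)) -
        γ ^ (p + 1) * ((p + k + 1).choose (k + 1) : ℝ) := by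
  intro p
  induction p with
  | zero => simp
  | succ p ih =>
      rw [sum_range_succ _ (p + 1), mul_add, ih, sum_range_succ _ (p + 1)]
      have pascal : ((p + 1 + k + 1).choose (k + 1) : ℝ) =
          ((p + 1 + k).choose k : ℝ) + ((p + 1 + k).choose (k + 1) : ℝ) := by
        rw [show p + 1 + k + 1 = (p + 1 + k) + 1 from rfl, Nat.choose_succ_succ]
        push_cast
        ring
      have h1 : p + 1 + (k + 1) = p + 1 + k + 1 := by ring
      have h2 : p + k + 1 = p + 1 + k := by ring
      rw [h1, h2, pascal]
      ring

theorem stmt0 (γ : ℝ) (hγ0 : 0 < γ) (hγ1 : γ < 1) (k p : ℕ) :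
    (1 - γ) ^ (k + 1) * ∑ l ∈ range (p + 1), γ ^ l * ((l + k).choose k : ℝ) ≤
      1 - γ ^ (p + 1) := by
  induction k with
  | zero =>
      simp only [Nat.add_zero, Nat.choose_zero_right, Nat.cast_one, mul_one, zero_add, pow_one]
      have := geom_sum_mul γ (p + 1)
      have h2 : (1 - γ) * ∑ x ∈ range (p + 1), γ ^ x = 1 - γ ^ (p + 1) := by
        linear_combination -this
      exact h2.le
  | succ k ih =>
      have hg : (0:ℝ) ≤ 1 - γ := by linarith
      have hpos : (0:ℝ) ≤ (1 - γ) ^ (k + 1) := by positivity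
      calc (1 - γ) ^ (k + 1 + 1) * ∑ l ∈ range (p + 1), γ ^ l * ((l + (k + 1)).choose (k + 1) : ℝ)
          = (1 - γ) ^ (k + 1) *
            ((1 - γ) * ∑ l ∈ range (p + 1), γ ^ l * ((l + (k + 1)).choose (k + 1) : ℝ)) := by
            ring
        _ = (1 - γ) ^ (k + 1) *
            ((∑ l ∈ range (p + 1), γ ^ l * ((l + k).choose k : ℝ)) -
              γ ^ (p + 1) * ((p + k + 1).choose (k + 1) : ℝ)) := by rw [key_id]
        _ ≤ (1 - γ) ^ (k + 1) * ∑ l ∈ range (p + 1), γ ^ l * ((l + k).choose k : ℝ) := by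
            apply mul_le_mul_of_nonneg_left _ hpos
            have : (0:ℝ) ≤ γ ^ (p + 1) * ((p + k + 1).choose (k + 1) : ℝ) := by positivity
            linarith
        _ ≤ 1 - γ ^ (p + 1) := ih
end

section
/- Let p and q be two geometric distributions on ℕ with parameters s̃ and s₂ respectively, i.e., p_n = (1-s̃) s̃^n and q_n = (1-s₂) s₂^n, where 0 < s₂ < s̃ < 1. Then the L¹ distance between p and q equals 2(s̃^{m₀+1} - s₂^{m₀+1}), where m₀ is the largest integer m such that (1-s̃) s̃^m ≤ (1-s₂) s₂^m, equivalently m₀ = ⌊ ln((1-s̃)/(1-s₂)) / ln(s₂/s̃) ⌋. -/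
theorem stmt4 (s₂ st : ℝ) (h0 : 0 < s₂) (h12 : s₂ < st) (h1 : st < 1)
    (m₀ : ℕ)
    (hm₀ : m₀ = ⌊Real.log ((1 - st) / (1 - s₂)) / Real.log (s₂ / st)⌋₊) :
    ∑' n : ℕ, |(1 - st) * st ^ n - (1 - s₂) * s₂ ^ n| =
      2 * (st ^ (m₀ + 1) - s₂ ^ (m₀ + 1)) := by
  have h02 : 0 < st := h0.trans h12
  have h21 : s₂ < 1 := h12.trans h1
  have hb1 : (0:ℝ) < 1 - st := by linarith
  have hb2 : (0:ℝ) < 1 - s₂ := by linarith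
  have hD : 0 < Real.log st - Real.log s₂ := by
    have := Real.log_lt_log h0 h12; linarith
  have hL : 0 < Real.log (1 - s₂) - Real.log (1 - st) := by
    have := Real.log_lt_log hb1 (by linarith : 1 - st < 1 - s₂); linarith
  have hx : Real.log ((1 - st) / (1 - s₂)) / Real.log (s₂ / st)
      = (Real.log (1 - s₂) - Real.log (1 - st)) / (Real.log st - Real.log s₂) := by
    rw [Real.log_div hb1.ne' hb2.ne', Real.log_div h0.ne' h02.ne',
      ← neg_div_neg_eq, neg_sub, neg_sub]
  have hx0 : 0 ≤ Real.log ((1 - st) / (1 - s₂)) / Real.log (s₂ / st) := by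
    rw [hx]; positivity
  -- sign characterization
  have key : ∀ n : ℕ, ((1 - st) * st ^ n ≤ (1 - s₂) * s₂ ^ n ↔ n ≤ m₀) := by
    intro n
    rw [hm₀, Nat.le_floor_iff hx0, hx, le_div_iff₀ hD]
    rw [← Real.log_le_log_iff (by positivity) (by positivity),
      Real.log_mul hb1.ne' (by positivity), Real.log_mul hb2.ne' (by positivity),
      Real.log_pow, Real.log_pow]
    constructor <;> intro h <;> nlinarith [h]
  set k := m₀ + 1 with hk
  set f : ℕ → ℝ := fun n => |(1 - st) * st ^ n - (1 - s₂) * s₂ ^ n| with hf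
  have hsum2 : Summable (fun n : ℕ => (1 - s₂) * s₂ ^ n) :=
    (summable_geometric_of_lt_one h0.le h21).mul_left _
  have hsumt : Summable (fun n : ℕ => (1 - st) * st ^ n) :=
    (summable_geometric_of_lt_one h02.le h1).mul_left _
  have hsumf : Summable f := by
    have : Summable (fun n : ℕ => (1 - st) * st ^ n - (1 - s₂) * s₂ ^ n) :=
      hsumt.sub hsum2
    exact this.abs
  have hsplit := Summable.sum_add_tsum_nat_add (f := f) k hsumf
  have hfin : ∑ n ∈ Finset.range k, f n = st ^ k - s₂ ^ k := by
    have h1' : ∀ n ∈ Finset.range k, f n = (1 - s₂) * s₂ ^ n - (1 - st) * st ^ n := by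
      intro n hn
      rw [Finset.mem_range, hk] at hn
      have := (key n).mpr (Nat.lt_succ_iff.mp hn)
      rw [hf]
      simp only
      rw [abs_of_nonpos (by linarith)]
      ring
    rw [Finset.sum_congr rfl h1', Finset.sum_sub_distrib,
      ← Finset.mul_sum, ← Finset.mul_sum, geom_sum_eq (by linarith : s₂ ≠ 1),
      geom_sum_eq (by linarith : st ≠ 1)]
    have hne2 : s₂ - 1 ≠ 0 := by linarith
    have hne1 : st - 1 ≠ 0 := by linarith
    field_simp
    ring
  have htail : ∑' n : ℕ, f (n + k) = st ^ k - s₂ ^ k := by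
    have h1' : ∀ n : ℕ, f (n + k) = (1 - st) * st ^ k * st ^ n - (1 - s₂) * s₂ ^ k * s₂ ^ n := by
      intro n
      have hge : (1 - s₂) * s₂ ^ (n + k) ≤ (1 - st) * st ^ (n + k) := by
        by_contra hcon
        push_neg at hcon
        have := (key (n + k)).mp hcon.le
        omega
      rw [hf]
      simp only
      rw [abs_of_nonneg (by linarith), pow_add, pow_add]
      ring
    rw [tsum_congr h1']
    have hs1 : Summable (fun n : ℕ => (1 - st) * st ^ k * st ^ n) :=
      (summable_geometric_of_lt_one h02.le h1).mul_left _
    have hs2 : Summable (fun n : ℕ => (1 - s₂) * s₂ ^ k * s₂ ^ n) :=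
      (summable_geometric_of_lt_one h0.le h21).mul_left _
    rw [Summable.tsum_sub hs1 hs2, tsum_mul_left, tsum_mul_left,
      tsum_geometric_of_lt_one h02.le h1, tsum_geometric_of_lt_one h0.le h21]
    field_simp
  rw [← hsplit, hfin, htail]
  ring
end

section
/- Let 0 < s₂ < s̃ < 1 and define f(n) = (1-s̃) s̃^n - (1-s₂) s₂^n for n ∈ ℕ. Then there exists m₀ ∈ ℕ such that f(n) ≤ 0 for all n ≤ m₀ and f(n) > 0 for all n > m₀; moreover m₀ = ⌊ ln((1-s̃)/(1-s₂)) / ln(s₂/s̃) ⌋. -/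
theorem stmt5 (s₂ st : ℝ) (h0 : 0 < s₂) (h12 : s₂ < st) (h1 : st < 1) :
    ∃ m₀ : ℕ,
      (∀ n : ℕ, n ≤ m₀ → (1 - st) * st ^ n - (1 - s₂) * s₂ ^ n ≤ 0) ∧
      (∀ n : ℕ, m₀ < n → 0 < (1 - st) * st ^ n - (1 - s₂) * s₂ ^ n) ∧
      m₀ = ⌊Real.log ((1 - st) / (1 - s₂)) / Real.log (s₂ / st)⌋₊ := by
  have hst : 0 < st := h0.trans h12
  have h1st : 0 < 1 - st := by linarith
  have h1s₂ : 0 < 1 - s₂ := by linarith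
  set a : ℝ := Real.log ((1 - st) / (1 - s₂)) with ha
  set b : ℝ := Real.log (s₂ / st) with hb
  have hbneg : b < 0 := by
    apply Real.log_neg (by positivity)
    rw [div_lt_one hst]; exact h12
  have haneg : a < 0 := by
    apply Real.log_neg (by positivity)
    rw [div_lt_one h1s₂]; linarith
  have hxa : a = Real.log (1 - st) - Real.log (1 - s₂) := Real.log_div (by linarith) (by linarith)
  have hxb : b = Real.log s₂ - Real.log st := Real.log_div (by linarith) (by linarith)
  have hxpos : 0 ≤ a / b := le_of_lt (div_pos_of_neg_of_neg haneg hbneg)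
  -- key: for real n ≥ 0, the inequality characterization
  have key : ∀ n : ℕ, ((1 - st) * st ^ n ≤ (1 - s₂) * s₂ ^ n ↔ a ≤ n * b) := by
    intro n
    rw [← Real.log_le_log_iff (by positivity) (by positivity),
      Real.log_mul (by linarith) (by positivity),
      Real.log_mul (by linarith) (by positivity),
      Real.log_pow, Real.log_pow, hxa, hxb]
    constructor <;> intro h <;> nlinarith [h]
  refine ⟨⌊a / b⌋₊, ?_, ?_, rfl⟩
  · intro n hn
    have hfl : (n : ℝ) ≤ a / b := le_trans (Nat.cast_le.2 hn) (Nat.floor_le hxpos)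
    have : a ≤ n * b := by
      rw [le_div_iff_of_neg hbneg] at hfl
      linarith [hfl]
    have := (key n).2 this
    linarith
  · intro n hn
    have hfl : a / b < (n : ℝ) := (Nat.floor_lt hxpos).1 hn
    have h2 : ¬ a ≤ n * b := by
      rw [div_lt_iff_of_neg hbneg] at hfl
      intro h; linarith
    have := (key n).not.2 h2
    push_neg at this
    linarith
end

section
/- For r₀ ∈ (0,1) and 0 < λ < 1, define k₀^{(c)} = sqrt((1-λ²r₀²)/(1-r₀²)) and k₀^{amp} = sqrt((1-s₁)/(1-s₂)) with s₁ = (1-r₀)/(1+r₀), s₂ = (1-λr₀)/(1+λr₀). Then k₀^{(c)} < k₀^{amp} if and only if λ < min{1, (1-r₀)/r₀}. In particular, if r₀ ≤ 1/2 then k₀^{(c)} < k₀^{amp} for all λ ∈ (0,1). -/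
theorem stmt16 (r₀ lam : ℝ) (hr0 : 0 < r₀) (hr1 : r₀ < 1) (hlam0 : 0 < lam) (hlam1 : lam < 1)
    (s₁ s₂ : ℝ) (hs₁ : s₁ = (1 - r₀) / (1 + r₀)) (hs₂ : s₂ = (1 - lam * r₀) / (1 + lam * r₀)) :
    (Real.sqrt ((1 - lam ^ 2 * r₀ ^ 2) / (1 - r₀ ^ 2)) <
        Real.sqrt ((1 - s₁) / (1 - s₂)) ↔
      lam < min 1 ((1 - r₀) / r₀)) ∧
    (r₀ ≤ 1 / 2 →
      Real.sqrt ((1 - lam ^ 2 * r₀ ^ 2) / (1 - r₀ ^ 2)) <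
        Real.sqrt ((1 - s₁) / (1 - s₂))) := by
  have hlr : lam * r₀ < 1 := by nlinarith
  have hp1 : (0:ℝ) < 1 + r₀ := by linarith
  have hp2 : (0:ℝ) < 1 + lam * r₀ := by nlinarith
  have hd1 : (0:ℝ) < 1 - r₀ ^ 2 := by nlinarith
  have hn1 : (0:ℝ) < 1 - lam ^ 2 * r₀ ^ 2 := by nlinarith
  have h1s1 : 1 - s₁ = 2 * r₀ / (1 + r₀) := by
    rw [hs₁]; field_simp; ring
  have h1s2 : 1 - s₂ = 2 * (lam * r₀) / (1 + lam * r₀) := by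
    rw [hs₂]; field_simp; ring
  have hd2 : (0:ℝ) < 1 - s₂ := by
    rw [h1s2]; positivity
  have hA : (0:ℝ) ≤ (1 - lam ^ 2 * r₀ ^ 2) / (1 - r₀ ^ 2) := by positivity
  have hiff : Real.sqrt ((1 - lam ^ 2 * r₀ ^ 2) / (1 - r₀ ^ 2)) <
      Real.sqrt ((1 - s₁) / (1 - s₂)) ↔ lam < (1 - r₀) / r₀ := by
    rw [Real.sqrt_lt_sqrt_iff hA, div_lt_div_iff₀ hd1 hd2, lt_div_iff₀ hr0, h1s1, h1s2,
      mul_div_assoc', div_mul_eq_mul_div, div_lt_div_iff₀ hp2 hp1]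
    constructor
    · intro h
      by_contra hc
      push_neg at hc
      have h4 : (0:ℝ) ≤ (1 - lam) * (lam * r₀ + r₀ - 1) :=
        mul_nonneg (by linarith) (by linarith)
      nlinarith [mul_nonneg (mul_pos hr0 (mul_pos hp1 hp2)).le h4]
    · intro h
      have h1 : (0:ℝ) < 1 - lam := by linarith
      have key : lam * (1 - lam * r₀) < 1 - r₀ := by nlinarith
      nlinarith [mul_pos hr0 (mul_pos hp1 hp2), mul_pos hp1 hp2, mul_pos hr0 hp1,
        mul_pos hr0 hp2]
  constructor
  · rw [hiff, lt_min_iff]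
    constructor
    · intro h; exact ⟨hlam1, h⟩
    · exact fun h => h.2
  · intro hhalf
    rw [hiff, lt_div_iff₀ hr0]
    nlinarith
end

section
/- For r₀ ∈ (0,1) and λ > 1 with λ r₀ < 1, set s₁ = (1-r₀)/(1+r₀), s₂ = (1-λr₀)/(1+λr₀), k₀^{att} = sqrt(s₂(1-s₁)/(s₁(1-s₂))), and k₀^{(c)} = sqrt((1-λ²r₀²)/(1-r₀²)). Then 0 < k₀^{att} < k₀^{(c)} < 1. -/
theorem stmt17 (r₀ lam : ℝ) (hr0 : 0 < r₀) (hr1 : r₀ < 1) (hlam : 1 < lam)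
    (hphys : lam * r₀ < 1)
    (s₁ s₂ : ℝ) (hs₁ : s₁ = (1 - r₀) / (1 + r₀)) (hs₂ : s₂ = (1 - lam * r₀) / (1 + lam * r₀)) :
    0 < Real.sqrt (s₂ * (1 - s₁) / (s₁ * (1 - s₂))) ∧
    Real.sqrt (s₂ * (1 - s₁) / (s₁ * (1 - s₂))) <
      Real.sqrt ((1 - lam ^ 2 * r₀ ^ 2) / (1 - r₀ ^ 2)) ∧
    Real.sqrt ((1 - lam ^ 2 * r₀ ^ 2) / (1 - r₀ ^ 2)) < 1 := by
  have hlr : 0 < lam * r₀ := by nlinarith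
  have h1 : (0:ℝ) < 1 + r₀ := by linarith
  have h2 : (0:ℝ) < 1 + lam * r₀ := by linarith
  have h3 : (0:ℝ) < 1 - r₀ := by linarith
  have h4 : (0:ℝ) < 1 - lam * r₀ := by linarith
  have e1 : s₂ * (1 - s₁) / (s₁ * (1 - s₂)) = (1 - lam * r₀) / (lam * (1 - r₀)) := by
    subst hs₁ hs₂
    field_simp
    ring
  have e2 : (1 - lam ^ 2 * r₀ ^ 2) / (1 - r₀ ^ 2)
      = ((1 - lam * r₀) * (1 + lam * r₀)) / ((1 - r₀) * (1 + r₀)) := by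
    ring_nf
  rw [e1, e2]
  have hd1 : (0:ℝ) < lam * (1 - r₀) := by positivity
  have hd2 : (0:ℝ) < (1 - r₀) * (1 + r₀) := by positivity
  have hA : (0:ℝ) < (1 - lam * r₀) / (lam * (1 - r₀)) := by positivity
  refine ⟨Real.sqrt_pos.mpr hA, ?_, ?_⟩
  · apply Real.sqrt_lt_sqrt hA.le
    rw [div_lt_div_iff₀ hd1 hd2]
    have key : 0 < (1 - lam * r₀) * (1 - r₀) * ((lam - 1) * (1 + r₀ * (lam + 1))) :=
      mul_pos (mul_pos h4 h3) (mul_pos (by linarith) (by nlinarith))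
    nlinarith [key]
  · rw [Real.sqrt_lt' one_pos, one_pow, div_lt_one hd2]
    nlinarith [mul_pos (mul_pos hr0 hr0) (mul_pos (sub_pos.mpr hlam) (by linarith : (0:ℝ) < lam + 1))]
end
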